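/- arXiv:2104.05862 — 3 statements merged into one kernel-verified Lean document; each statement's English description precedes it below -/
import Mathlib

section
/- A single-row sequence of red and blue beads with equally many red and blue beads has at least two distinct non-crossing matchings whenever it contains a (not necessarily contiguous) subsequence of colors red, blue, red, blue or of colors blue, red, blue, red. -/
/-- A bead is colored red or blue. -/
inductive Color : Type
  | red
  | blue
  deriving DecidableEq

/-- A perfect matching of the beads of a single-row bead word `w`, encoded as a
fixed-point-free involution on positions, in which every matched pair consists of
beads of different colors (one red, one blue). -/
structure Matching (w : List Color) where
  pair : Fin w.length → Fin w.length
  invol : ∀ i, pair (pair i) = i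
  ne : ∀ i, pair i ≠ i
  colorOK : ∀ i, w.get i ≠ w.get (pair i)

/-- A matching is non-crossing if there are no matched pairs `{i,k}`, `{j,l}`
with `i < j < k < l`. -/
def NonCrossing {w : List Color} (m : Matching w) : Prop :=
  ∀ i j : Fin w.length, ¬ (i < j ∧ j < m.pair i ∧ m.pair i < m.pair j)

/-!
Deleting two adjacent beads of different colours keeps a word balanced, and a non-crossing
matching of the shorter word extends (injectively) to one of the longer word that pairs the two
deleted beads; so every balanced word has a non-crossing matching. If the word has a factor
`x y x` with `x ≠ y`, pairing the middle bead with either neighbour gives two different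
matchings. Otherwise, between the middle `d` and `c` of an occurrence of `c d c d` there is an
adjacent pair `d c` whose outer neighbours are again `d` and `c`, so deleting it keeps an
occurrence of the pattern, and induction on the length applies.
-/

lemma Color.eq_or_eq_of_ne {c d : Color} (hcd : c ≠ d) (x : Color) : x = c ∨ x = d := by
  cases c <;> cases d <;> cases x <;> simp_all

def IsBalanced (w : List Color) : Prop := w.count Color.red = w.count Color.blue

lemma isBalanced_append_cons_cons_iff {a b : Color} (hab : a ≠ b) {u v : List Color} :
    IsBalanced (u ++ a :: b :: v) ↔ IsBalanced (u ++ v) := by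
  unfold IsBalanced
  cases a <;> cases b <;> simp_all [List.count_append] <;> omega

lemma exists_eq_append_cons_cons_of_mem {c d : Color} (hcd : c ≠ d) :
    ∀ {M : List Color}, d ∈ M → ∃ P Q, c :: M = P ++ c :: d :: Q
  | x :: M, hM => by
    rcases Color.eq_or_eq_of_ne hcd x with rfl | rfl
    · obtain ⟨P, Q, h⟩ :=
        exists_eq_append_cons_cons_of_mem hcd (List.mem_of_ne_of_mem hcd.symm hM)
      exact ⟨x :: P, Q, by rw [h]; rfl⟩
    · exact ⟨[], M, rfl⟩

lemma IsBalanced.exists_eq_append_cons_cons {w : List Color} (hw : IsBalanced w)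
    (hne : w ≠ []) : ∃ u a b v, a ≠ b ∧ w = u ++ a :: b :: v := by
  obtain ⟨x, w', rfl⟩ := List.exists_cons_of_ne_nil hne
  obtain ⟨y, hxy, hy⟩ : ∃ y, x ≠ y ∧ y ∈ w' := by
    unfold IsBalanced at hw
    cases x
    · refine ⟨Color.blue, by decide, List.count_pos_iff.1 ?_⟩
      simp only [List.count_cons_self, List.count_cons_of_ne (by decide : Color.red ≠ Color.blue)]
        at hw
      omega
    · refine ⟨Color.red, by decide, List.count_pos_iff.1 ?_⟩
      simp only [List.count_cons_self, List.count_cons_of_ne (by decide : Color.blue ≠ Color.red)]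
        at hw
      omega
  obtain ⟨P, Q, h⟩ := exists_eq_append_cons_cons_of_mem hxy hy
  exact ⟨P, x, y, Q, hxy, h⟩

def HasAlternatingTriple (w : List Color) : Prop :=
  ∃ u x y v, x ≠ y ∧ w = u ++ x :: y :: x :: v

lemma exists_removable_pair_of_mem {c d : Color} (hcd : c ≠ d) {L R : List Color}
    (hL : c ∈ L) (hR : d ∈ R) (halt : ¬ HasAlternatingTriple (L ++ d :: c :: R)) :
    ∃ u v, L ++ d :: c :: R = u ++ d :: c :: v ∧ List.Sublist [c, d, c, d] (u ++ v) := by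
  obtain ⟨L', e, rfl⟩ := (L.eq_nil_or_concat').resolve_left (List.ne_nil_of_mem hL)
  obtain ⟨f, R', rfl⟩ := List.exists_cons_of_ne_nil (List.ne_nil_of_mem hR)
  have he : e = d := by
    refine (Color.eq_or_eq_of_ne hcd e).resolve_left ?_
    rintro rfl
    exact halt ⟨L', e, d, f :: R', hcd, by simp⟩
  have hf : f = c := by
    refine (Color.eq_or_eq_of_ne hcd f).resolve_right ?_
    rintro rfl
    exact halt ⟨L' ++ [e], f, c, R', hcd.symm, by simp⟩
  subst e f
  refine ⟨L' ++ [d], c :: R', by simp, ?_⟩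
  have hL' : c ∈ L' := by simpa [hcd] using hL
  have hR' : d ∈ R' := by simpa [hcd.symm] using hR
  simpa using (List.singleton_sublist.2 hL').append
    ((List.Sublist.refl [d, c]).append (List.singleton_sublist.2 hR'))

lemma exists_removable_pair {c d : Color} (hcd : c ≠ d) {w : List Color}
    (hw : List.Sublist [c, d, c, d] w) (halt : ¬ HasAlternatingTriple w) :
    ∃ u v, w = u ++ d :: c :: v ∧ List.Sublist [c, d, c, d] (u ++ v) := by
  obtain ⟨A, w₁, rfl, hA, hw₁⟩ := List.cons_sublist_iff.1 hw
  obtain ⟨B, w₂, rfl, hB, hw₂⟩ := List.cons_sublist_iff.1 hw₁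
  obtain ⟨C, D, rfl, hC, hD⟩ := List.cons_sublist_iff.1 hw₂
  obtain ⟨B₁, B₂, rfl⟩ := List.append_of_mem hB
  obtain ⟨P, Q, hPQ⟩ := exists_eq_append_cons_cons_of_mem hcd.symm
    (List.mem_append_right B₂ hC)
  have hw : A ++ (B₁ ++ d :: B₂ ++ (C ++ D)) = (A ++ B₁ ++ P) ++ d :: c :: (Q ++ D) :=
    calc _ = A ++ B₁ ++ d :: (B₂ ++ C) ++ D := by simp
      _ = _ := by rw [hPQ]; simp
  rw [hw] at halt ⊢
  exact exists_removable_pair_of_mem hcd (by simp [hA])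
    (List.mem_append_right Q (List.singleton_sublist.1 hD)) halt

/-- A non-crossing matching of `w` given by its pairing function on `ℕ` (its values outside
`[0, w.length)` are irrelevant), so that positions can be shifted without `Fin` casts. -/
structure IsNCPairing (w : List Color) (f : ℕ → ℕ) : Prop where
  lt_length : ∀ i < w.length, f i < w.length
  invol : ∀ i < w.length, f (f i) = i
  getElem?_ne : ∀ i < w.length, w[i]? ≠ w[f i]?
  nonCrossing : ∀ i < w.length, ∀ j < w.length, i < j → j < f i → ¬ f i < f j

namespace IsNCPairing

variable {w : List Color} {f : ℕ → ℕ}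

def toMatching (hf : IsNCPairing w f) : Matching w where
  pair i := ⟨f i, hf.lt_length i i.2⟩
  invol i := Fin.ext (hf.invol i i.2)
  ne i h := hf.getElem?_ne i i.2 (by rw [show f i = i from congrArg Fin.val h])
  colorOK i h :=
    hf.getElem?_ne i i.2 (by simpa [List.getElem?_eq_getElem (hf.lt_length i i.2)] using h)

lemma toMatching_pair (hf : IsNCPairing w f) (i : Fin w.length) :
    (hf.toMatching.pair i : ℕ) = f i := rfl

lemma nonCrossing_toMatching (hf : IsNCPairing w f) : NonCrossing hf.toMatching :=
  fun i j ⟨hij, hj, hf'⟩ => hf.nonCrossing i i.2 j j.2 hij hj hf'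

end IsNCPairing

def shiftPast (p j : ℕ) : ℕ := if j < p then j else j + 2

lemma strictMono_shiftPast (p : ℕ) : StrictMono (shiftPast p) := by
  intro i j h; unfold shiftPast; split_ifs <;> omega

lemma shiftPast_lt_add_two {p n j : ℕ} (hp : p ≤ n) : shiftPast p j < n + 2 ↔ j < n := by
  unfold shiftPast; split_ifs <;> omega

lemma forall_lt_add_two_of_shiftPast {p n : ℕ} (hp : p ≤ n) {P : ℕ → Prop} (hl : P p)
    (hr : P (p + 1)) (hs : ∀ j < n, P (shiftPast p j)) : ∀ k < n + 2, P k := by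
  intro k hk
  rcases lt_trichotomy k p with h | rfl | h
  · simpa [shiftPast, h] using hs k (by omega)
  · exact hl
  · obtain rfl | h' := eq_or_lt_of_le (Nat.succ_le_of_lt h)
    · exact hr
    · simpa [shiftPast, show ¬ k - 2 < p by omega, show k - 2 + 2 = k by omega]
        using hs (k - 2) (by omega)

lemma getElem?_shiftPast (u v : List Color) (a b : Color) (j : ℕ) :
    (u ++ a :: b :: v)[shiftPast u.length j]? = (u ++ v)[j]? := by
  unfold shiftPast
  split_ifs with h
  · rw [List.getElem?_append_left h, List.getElem?_append_left h]
  · rw [List.getElem?_append_right (by omega), List.getElem?_append_right (by omega),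
      show j + 2 - u.length = j - u.length + 2 by omega]
    rfl

def insertPair (p : ℕ) (f : ℕ → ℕ) (k : ℕ) : ℕ :=
  if k < p then shiftPast p (f k)
  else if k = p then p + 1
  else if k = p + 1 then p
  else shiftPast p (f (k - 2))

@[simp] lemma insertPair_left (p : ℕ) (f : ℕ → ℕ) : insertPair p f p = p + 1 := by
  simp [insertPair]

@[simp] lemma insertPair_right (p : ℕ) (f : ℕ → ℕ) : insertPair p f (p + 1) = p := by
  simp [insertPair]

@[simp] lemma insertPair_shiftPast (p : ℕ) (f : ℕ → ℕ) (j : ℕ) :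
    insertPair p f (shiftPast p j) = shiftPast p (f j) := by
  unfold insertPair shiftPast
  split_ifs <;> first | omega | simp_all

lemma length_append_cons_cons {α : Type*} (u v : List α) (a b : α) :
    (u ++ a :: b :: v).length = (u ++ v).length + 2 := by
  simp only [List.length_append, List.length_cons]
  omega

lemma IsNCPairing.insertPair {u v : List Color} {a b : Color} (hab : a ≠ b) {f : ℕ → ℕ}
    (hf : IsNCPairing (u ++ v) f) : IsNCPairing (u ++ a :: b :: v) (insertPair u.length f) := by
  have hp : u.length ≤ (u ++ v).length := by simp
  have hcases := fun {P : ℕ → Prop} => @forall_lt_add_two_of_shiftPast u.length _ hp P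
  refine ⟨?_, ?_, ?_, ?_⟩ <;> rw [length_append_cons_cons]
  · refine hcases (by simp) (by simp only [insertPair_right]; omega) fun j hj => ?_
    simpa using (shiftPast_lt_add_two hp).2 (hf.lt_length j hj)
  · refine hcases (by simp) (by simp) fun j hj => ?_
    simp [hf.invol j hj]
  · refine hcases (by simp [hab]) (by simp [hab.symm]) fun j hj => ?_
    simpa [getElem?_shiftPast] using hf.getElem?_ne j hj
  · refine hcases (fun _ _ _ h => by simp only [insertPair_left] at h; omega)
      (fun _ _ _ h => by simp only [insertPair_right] at h; omega) fun i hi => ?_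
    refine hcases (fun _ h₂ h₃ => ?_) (fun _ h₂ h₃ => ?_) fun j hj h₁ h₂ h₃ => ?_
    · simp only [insertPair_shiftPast, insertPair_left] at h₂ h₃
      have : shiftPast u.length (f i) ≠ u.length + 1 := by unfold shiftPast; split_ifs <;> omega
      omega
    · simp only [insertPair_shiftPast, insertPair_right] at h₂ h₃
      omega
    · simp only [insertPair_shiftPast, (strictMono_shiftPast _).lt_iff_lt] at h₁ h₂ h₃
      exact hf.nonCrossing i hi j hj h₁ h₂ h₃

lemma IsBalanced.exists_isNCPairing {w : List Color} (hw : IsBalanced w) :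
    ∃ f, IsNCPairing w f := by
  induction hn : w.length using Nat.strong_induction_on generalizing w with
  | _ n ih =>
  rcases eq_or_ne w [] with rfl | hne
  · exact ⟨id, ⟨by simp, by simp, by simp, by simp⟩⟩
  obtain ⟨u, a, b, v, hab, rfl⟩ := hw.exists_eq_append_cons_cons hne
  obtain ⟨f, hf⟩ := ih (u ++ v).length (by rw [length_append_cons_cons] at hn; omega)
    ((isBalanced_append_cons_cons_iff hab).1 hw) rfl
  exact ⟨_, hf.insertPair hab⟩

lemma IsBalanced.exists_isNCPairing_pair {u v : List Color} {a b : Color} (hab : a ≠ b)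
    (hw : IsBalanced (u ++ a :: b :: v)) :
    ∃ f, IsNCPairing (u ++ a :: b :: v) f ∧ f u.length = u.length + 1 := by
  obtain ⟨f, hf⟩ := ((isBalanced_append_cons_cons_iff hab).1 hw).exists_isNCPairing
  exact ⟨_, hf.insertPair hab, insertPair_left _ _⟩

def HasTwoNCPairings (w : List Color) : Prop :=
  ∃ f g, IsNCPairing w f ∧ IsNCPairing w g ∧ ∃ i < w.length, f i ≠ g i

lemma HasTwoNCPairings.insertPair {u v : List Color} {a b : Color} (hab : a ≠ b)
    (h : HasTwoNCPairings (u ++ v)) : HasTwoNCPairings (u ++ a :: b :: v) := by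
  obtain ⟨f, g, hf, hg, i, hi, hfg⟩ := h
  refine ⟨_, _, hf.insertPair hab, hg.insertPair hab, shiftPast u.length i,
    ?_, by simpa using (strictMono_shiftPast _).injective.ne hfg⟩
  rw [length_append_cons_cons]
  exact (shiftPast_lt_add_two (by simp)).2 hi

lemma IsBalanced.hasTwoNCPairings_of_hasAlternatingTriple {w : List Color} (hw : IsBalanced w)
    (halt : HasAlternatingTriple w) : HasTwoNCPairings w := by
  obtain ⟨u, x, y, v, hxy, rfl⟩ := halt
  obtain ⟨f, hf, hfu⟩ := hw.exists_isNCPairing_pair hxy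
  have hw' : u ++ x :: y :: x :: v = (u ++ [x]) ++ y :: x :: v := by simp
  rw [hw'] at hw ⊢
  obtain ⟨g, hg, hgu⟩ := hw.exists_isNCPairing_pair hxy.symm
  refine ⟨f, g, hw' ▸ hf, hg, u.length + 1, by simp, ?_⟩
  have hf₁ : f (u.length + 1) = u.length := hfu ▸ hf.invol u.length (by simp)
  have hg₁ : g (u.length + 1) = u.length + 2 := by simpa using hgu
  omega

lemma IsBalanced.hasTwoNCPairings {w : List Color} (hw : IsBalanced w) {c d : Color}
    (hcd : c ≠ d) (hs : List.Sublist [c, d, c, d] w) : HasTwoNCPairings w := by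
  induction hn : w.length using Nat.strong_induction_on generalizing w with
  | _ n ih =>
  by_cases halt : HasAlternatingTriple w
  · exact hw.hasTwoNCPairings_of_hasAlternatingTriple halt
  obtain ⟨u, v, rfl, huv⟩ := exists_removable_pair hcd hs halt
  exact (ih (u ++ v).length (by rw [length_append_cons_cons] at hn; omega)
    ((isBalanced_append_cons_cons_iff hcd.symm).1 hw) huv rfl).insertPair hcd.symm

/-- A balanced single-row bead sequence containing a subsequence red,blue,red,blue or
blue,red,blue,red has at least two distinct non-crossing matchings. -/
theorem stmt2 (w : List Color) (hbal : w.count Color.red = w.count Color.blue)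
    (hsub : [Color.red, Color.blue, Color.red, Color.blue].Sublist w ∨
            [Color.blue, Color.red, Color.blue, Color.red].Sublist w) :
    ∃ m₁ m₂ : Matching w, NonCrossing m₁ ∧ NonCrossing m₂ ∧ m₁ ≠ m₂ := by
  obtain ⟨c, d, hcd, hs⟩ : ∃ c d : Color, c ≠ d ∧ [c, d, c, d].Sublist w := by
    rcases hsub with h | h
    · exact ⟨_, _, by decide, h⟩
    · exact ⟨_, _, by decide, h⟩
  obtain ⟨f, g, hf, hg, i, hi, hfg⟩ := IsBalanced.hasTwoNCPairings hbal hcd hs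
  refine ⟨hf.toMatching, hg.toMatching, hf.nonCrossing_toMatching, hg.nonCrossing_toMatching,
    fun h => hfg ?_⟩
  rw [← hf.toMatching_pair ⟨i, hi⟩, ← hg.toMatching_pair ⟨i, hi⟩, h]
end

section
/- Consider two rows of beads each colored red or blue, where arcs may connect two beads of different colors in the same row or two beads of the same color in different rows, and are drawn in the region between the rows without crossing. Such a configuration admits at least one non-crossing matching if and only if the number of red beads minus the number of blue beads in the top row equals the number of red beads minus the number of blue beads in the bottom row. -/
/-- A matching of a two-row bead configuration with top row `t` and bottom row `b`:
a fixed-point-free involution on all beads in which every pair consists either of two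
beads of different colors in the same row, or of two beads of the same color in
different rows. -/
structure TRMatching (t b : List Color) where
  pair : Fin t.length ⊕ Fin b.length → Fin t.length ⊕ Fin b.length
  invol : ∀ x, pair (pair x) = x
  ne : ∀ x, pair x ≠ x
  topColor : ∀ i j, pair (Sum.inl i) = Sum.inl j → t.get i ≠ t.get j
  botColor : ∀ i j, pair (Sum.inr i) = Sum.inr j → b.get i ≠ b.get j
  crossColor : ∀ i j, pair (Sum.inl i) = Sum.inr j → t.get i = b.get j

/-- Non-crossing condition for a two-row matching, with all arcs drawn in the strip
between the rows: two same-row arcs cross iff their endpoints interleave; a same-row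
arc crosses a cross arc iff the cross arc's endpoint in that row lies strictly between
the arc's endpoints; two cross arcs cross iff their endpoints appear in opposite
orders in the two rows. -/
def TRNonCrossing {t b : List Color} (m : TRMatching t b) : Prop :=
  (∀ i j k l : Fin t.length, m.pair (Sum.inl i) = Sum.inl k →
      m.pair (Sum.inl j) = Sum.inl l → ¬ (i < j ∧ j < k ∧ k < l)) ∧
  (∀ i j k l : Fin b.length, m.pair (Sum.inr i) = Sum.inr k →
      m.pair (Sum.inr j) = Sum.inr l → ¬ (i < j ∧ j < k ∧ k < l)) ∧
  (∀ (a c i : Fin t.length) (j : Fin b.length), m.pair (Sum.inl a) = Sum.inl c →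
      m.pair (Sum.inl i) = Sum.inr j → ¬ (a < i ∧ i < c)) ∧
  (∀ (a c : Fin b.length) (i : Fin t.length) (j : Fin b.length),
      m.pair (Sum.inr a) = Sum.inr c →
      m.pair (Sum.inl i) = Sum.inr j → ¬ (a < j ∧ j < c)) ∧
  (∀ (i i' : Fin t.length) (j j' : Fin b.length), m.pair (Sum.inl i) = Sum.inr j →
      m.pair (Sum.inl i') = Sum.inr j' → i < i' → ¬ j' < j)

def cval : Color → ℤ
  | Color.red => 1
  | Color.blue => -1

lemma cval_sum (l : List Color) :
    ∑ i : Fin l.length, cval (l.get i) = (l.count Color.red : ℤ) - l.count Color.blue := by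
  induction l with
  | nil => simp
  | cons a l ih =>
    have : ∑ i : Fin (a :: l).length, cval ((a :: l).get i)
        = cval a + ∑ i : Fin l.length, cval (l.get i) := by
      rw [show ∑ i : Fin (a :: l).length, cval ((a :: l).get i)
          = ∑ i : Fin (l.length + 1), cval ((a :: l).get i) from rfl, Fin.sum_univ_succ]
      rfl
    rw [this, ih]
    simp only [List.count_cons]
    cases a <;> simp [cval] <;> push_cast <;> ring

lemma forward {t b : List Color} (m : TRMatching t b) :
    (t.count Color.red : ℤ) - t.count Color.blue
      = (b.count Color.red : ℤ) - b.count Color.blue := by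
  classical
  set f : Fin t.length ⊕ Fin b.length → ℤ := fun x =>
    match x with
    | Sum.inl i => cval (t.get i)
    | Sum.inr j => -cval (b.get j) with hf
  have key : ∑ x : Fin t.length ⊕ Fin b.length, f x = 0 := by
    apply Finset.sum_involution (fun x _ => m.pair x)
    · intro x _
      match hx : m.pair x with
      | Sum.inl k =>
        match x with
        | Sum.inl i =>
          have := m.topColor i k hx
          simp only [hf]
          cases hc : t.get i <;> cases hc2 : t.get k <;> simp_all [cval]
        | Sum.inr j =>
          have h2 : m.pair (Sum.inl k) = Sum.inr j := by
            rw [← hx, m.invol]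
          have := m.crossColor k j h2
          simp only [hf, this]; ring
      | Sum.inr j' =>
        match x with
        | Sum.inl i =>
          have := m.crossColor i j' hx
          simp only [hf, this]; ring
        | Sum.inr j =>
          have := m.botColor j j' hx
          simp only [hf]
          cases hc : b.get j <;> cases hc2 : b.get j' <;> simp_all [cval]
    · intro a _ _; exact m.ne a
    · intro a ha; exact Finset.mem_univ _
    · intro a _; exact m.invol a
  rw [Fintype.sum_sum_type] at key
  simp only [hf] at key
  rw [cval_sum t] at key
  have : ∑ j : Fin b.length, -cval (b.get j) = -((b.count Color.red : ℤ) - b.count Color.blue) := by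
    rw [← cval_sum b]; rw [Finset.sum_neg_distrib]
  rw [this] at key
  linarith

section Ext
variable (u v : List Color) (x y : Color)

def emb (k : Fin (u ++ v).length) : Fin (u ++ x :: y :: v).length :=
  if k.val < u.length then
    ⟨k.val, by have := k.isLt; simp only [List.length_append, List.length_cons] at *; omega⟩
  else
    ⟨k.val + 2, by have := k.isLt; simp only [List.length_append, List.length_cons] at *; omega⟩

def shr (i : Fin (u ++ x :: y :: v).length) (h1 : i.val ≠ u.length)
    (h2 : i.val ≠ u.length + 1) : Fin (u ++ v).length :=
  if h : i.val < u.length then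
    ⟨i.val, by simp only [List.length_append]; omega⟩
  else
    ⟨i.val - 2, by have := i.isLt; simp only [List.length_append, List.length_cons] at *; omega⟩

lemma emb_cases (k : Fin (u ++ v).length) :
    (k.val < u.length ∧ (emb u v x y k).val = k.val) ∨
    (u.length ≤ k.val ∧ (emb u v x y k).val = k.val + 2) := by
  unfold emb; split
  · exact Or.inl ⟨by omega, rfl⟩
  · exact Or.inr ⟨by omega, rfl⟩

lemma emb_inj {k k' : Fin (u ++ v).length} (h : emb u v x y k = emb u v x y k') : k = k' := by
  rcases emb_cases u v x y k with ⟨h1, e1⟩ | ⟨h1, e1⟩ <;>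
    rcases emb_cases u v x y k' with ⟨h2, e2⟩ | ⟨h2, e2⟩ <;>
      (apply Fin.ext; have := congrArg Fin.val h; omega)

lemma emb_lt_iff {k k' : Fin (u ++ v).length} :
    emb u v x y k < emb u v x y k' ↔ k < k' := by
  rcases emb_cases u v x y k with ⟨h1, e1⟩ | ⟨h1, e1⟩ <;>
    rcases emb_cases u v x y k' with ⟨h2, e2⟩ | ⟨h2, e2⟩ <;>
      (simp only [Fin.lt_def]; omega)

lemma shr_val (i : Fin (u ++ x :: y :: v).length) (h1 : i.val ≠ u.length)
    (h2 : i.val ≠ u.length + 1) :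
    (i.val < u.length ∧ (shr u v x y i h1 h2).val = i.val) ∨
    (u.length + 2 ≤ i.val ∧ (shr u v x y i h1 h2).val = i.val - 2) := by
  unfold shr; split
  · exact Or.inl ⟨by omega, rfl⟩
  · exact Or.inr ⟨by omega, rfl⟩

lemma emb_shr (i : Fin (u ++ x :: y :: v).length) (h1 : i.val ≠ u.length)
    (h2 : i.val ≠ u.length + 1) : emb u v x y (shr u v x y i h1 h2) = i := by
  apply Fin.ext
  rcases shr_val u v x y i h1 h2 with ⟨h, e⟩ | ⟨h, e⟩ <;>
    rcases emb_cases u v x y (shr u v x y i h1 h2) with ⟨h', e'⟩ | ⟨h', e'⟩ <;> omega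


lemma get_emb (k : Fin (u ++ v).length) :
    (u ++ x :: y :: v).get (emb u v x y k) = (u ++ v).get k := by
  rcases emb_cases u v x y k with ⟨h, he⟩ | ⟨h, he⟩
  · simp only [List.get_eq_getElem, he]
    rw [List.getElem_append_left h, List.getElem_append_left h]
  · simp only [List.get_eq_getElem, he]
    rw [List.getElem_append_right (by omega : u.length ≤ k.val + 2),
        List.getElem_append_right h]
    have h3 : k.val + 2 - u.length = (k.val - u.length) + 1 + 1 := by omega
    simp only [h3, List.getElem_cons_succ]

lemma get_p (h : u.length < (u ++ x :: y :: v).length) :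
    (u ++ x :: y :: v).get ⟨u.length, h⟩ = x := by
  simp only [List.get_eq_getElem]
  rw [List.getElem_append_right (le_refl u.length)]
  simp

lemma get_p1 (h : u.length + 1 < (u ++ x :: y :: v).length) :
    (u ++ x :: y :: v).get ⟨u.length + 1, h⟩ = y := by
  simp only [List.get_eq_getElem]
  rw [List.getElem_append_right (by omega : u.length ≤ u.length + 1)]
  simp

end Ext

section Ext2
variable (u v : List Color) (x y : Color) (b : List Color)

def epair (m : TRMatching (u ++ v) b) :
    Fin (u ++ x :: y :: v).length ⊕ Fin b.length →
      Fin (u ++ x :: y :: v).length ⊕ Fin b.length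
  | Sum.inl i =>
    if h : i.val = u.length then
      Sum.inl ⟨u.length + 1,
        by have := i.isLt; simp only [List.length_append, List.length_cons] at *; omega⟩
    else if h2 : i.val = u.length + 1 then
      Sum.inl ⟨u.length, by have := i.isLt; omega⟩
    else Sum.map (emb u v x y) id (m.pair (Sum.inl (shr u v x y i h h2)))
  | Sum.inr j => Sum.map (emb u v x y) id (m.pair (Sum.inr j))

variable (m : TRMatching (u ++ v) b)

lemma epair_p (i : Fin (u ++ x :: y :: v).length) (h : i.val = u.length) :
    ∃ k, epair u v x y b m (Sum.inl i) = Sum.inl k ∧ k.val = u.length + 1 := by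
  simp only [epair, dif_pos h]
  exact ⟨_, rfl, rfl⟩

lemma epair_p1 (i : Fin (u ++ x :: y :: v).length) (h : i.val = u.length + 1) :
    ∃ k, epair u v x y b m (Sum.inl i) = Sum.inl k ∧ k.val = u.length := by
  have h' : i.val ≠ u.length := by omega
  simp only [epair, dif_neg h', dif_pos h]
  exact ⟨_, rfl, rfl⟩

lemma epair_other (i : Fin (u ++ x :: y :: v).length) (h1 : i.val ≠ u.length)
    (h2 : i.val ≠ u.length + 1) :
    epair u v x y b m (Sum.inl i)
      = Sum.map (emb u v x y) id (m.pair (Sum.inl (shr u v x y i h1 h2))) := by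
  simp only [epair, dif_neg h1, dif_neg h2]

lemma epair_inr (j : Fin b.length) :
    epair u v x y b m (Sum.inr j) = Sum.map (emb u v x y) id (m.pair (Sum.inr j)) := rfl

/-- characterization of inl-inl pairs -/
lemma epair_inl_inl {i k : Fin (u ++ x :: y :: v).length}
    (h : epair u v x y b m (Sum.inl i) = Sum.inl k) :
    (i.val = u.length ∧ k.val = u.length + 1) ∨
    (i.val = u.length + 1 ∧ k.val = u.length) ∨
    (∃ i₀ k₀, m.pair (Sum.inl i₀) = Sum.inl k₀ ∧ i = emb u v x y i₀ ∧ k = emb u v x y k₀) := by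
  by_cases h1 : i.val = u.length
  · obtain ⟨k', hk', hv⟩ := epair_p u v x y b m i h1
    rw [hk'] at h; cases h
    exact Or.inl ⟨h1, hv⟩
  by_cases h2 : i.val = u.length + 1
  · obtain ⟨k', hk', hv⟩ := epair_p1 u v x y b m i h2
    rw [hk'] at h; cases h
    exact Or.inr (Or.inl ⟨h2, hv⟩)
  · rw [epair_other u v x y b m i h1 h2] at h
    refine Or.inr (Or.inr ?_)
    cases hp : m.pair (Sum.inl (shr u v x y i h1 h2)) with
    | inl k₀ =>
      rw [hp] at h
      simp only [Sum.map_inl, Sum.inl.injEq] at h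
      exact ⟨_, k₀, hp, (emb_shr u v x y i h1 h2).symm, h.symm⟩
    | inr j₀ => rw [hp] at h; simp at h

/-- characterization of inl-inr pairs -/
lemma epair_inl_inr {i : Fin (u ++ x :: y :: v).length} {j : Fin b.length}
    (h : epair u v x y b m (Sum.inl i) = Sum.inr j) :
    ∃ i₀, m.pair (Sum.inl i₀) = Sum.inr j ∧ i = emb u v x y i₀ := by
  by_cases h1 : i.val = u.length
  · obtain ⟨k', hk', _⟩ := epair_p u v x y b m i h1
    rw [hk'] at h; cases h
  by_cases h2 : i.val = u.length + 1
  · obtain ⟨k', hk', _⟩ := epair_p1 u v x y b m i h2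
    rw [hk'] at h; cases h
  · rw [epair_other u v x y b m i h1 h2] at h
    cases hp : m.pair (Sum.inl (shr u v x y i h1 h2)) with
    | inl k₀ => rw [hp] at h; simp at h
    | inr j₀ =>
      rw [hp] at h
      simp only [Sum.map_inr, id, Sum.inr.injEq] at h
      subst h
      exact ⟨_, hp, (emb_shr u v x y i h1 h2).symm⟩

lemma epair_inr_inr {j j' : Fin b.length}
    (h : epair u v x y b m (Sum.inr j) = Sum.inr j') :
    m.pair (Sum.inr j) = Sum.inr j' := by
  rw [epair_inr] at h
  cases hp : m.pair (Sum.inr j) with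
  | inl k₀ => rw [hp] at h; simp at h
  | inr j₀ => rw [hp] at h; simpa using h

lemma epair_inr_inl {j : Fin b.length} {k : Fin (u ++ x :: y :: v).length}
    (h : epair u v x y b m (Sum.inr j) = Sum.inl k) :
    ∃ k₀, m.pair (Sum.inr j) = Sum.inl k₀ ∧ k = emb u v x y k₀ := by
  rw [epair_inr] at h
  cases hp : m.pair (Sum.inr j) with
  | inl k₀ =>
    rw [hp] at h
    simp only [Sum.map_inl, Sum.inl.injEq] at h
    exact ⟨k₀, rfl, h.symm⟩
  | inr j₀ => rw [hp] at h; simp at h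

end Ext2

section Ext3
variable (u v : List Color) (x y : Color) (b : List Color) (m : TRMatching (u ++ v) b)

lemma shr_emb (k₀ : Fin (u ++ v).length) (h1 h2) :
    shr u v x y (emb u v x y k₀) h1 h2 = k₀ := by
  apply emb_inj u v x y
  rw [emb_shr]

lemma emb_ne_p (k₀ : Fin (u ++ v).length) :
    (emb u v x y k₀).val ≠ u.length ∧ (emb u v x y k₀).val ≠ u.length + 1 := by
  rcases emb_cases u v x y k₀ with ⟨h, e⟩ | ⟨h, e⟩ <;> omega

lemma epair_emb (k₀ : Fin (u ++ v).length) :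
    epair u v x y b m (Sum.inl (emb u v x y k₀))
      = Sum.map (emb u v x y) id (m.pair (Sum.inl k₀)) := by
  obtain ⟨h1, h2⟩ := emb_ne_p u v x y k₀
  rw [epair_other u v x y b m _ h1 h2, shr_emb]

lemma emb_val_lt_iff (k k' : Fin (u ++ v).length) :
    (emb u v x y k).val < (emb u v x y k').val ↔ k.val < k'.val := by
  rcases emb_cases u v x y k with ⟨h1, e1⟩ | ⟨h1, e1⟩ <;>
    rcases emb_cases u v x y k' with ⟨h2, e2⟩ | ⟨h2, e2⟩ <;> omega

def extMatching (hxy : x ≠ y) : TRMatching (u ++ x :: y :: v) b where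
  pair := epair u v x y b m
  invol := by
    intro z
    rcases z with i | j
    · by_cases h1 : i.val = u.length
      · obtain ⟨k, hk, hkv⟩ := epair_p u v x y b m i h1
        rw [hk]
        obtain ⟨k2, hk2, hk2v⟩ := epair_p1 u v x y b m k hkv
        rw [hk2]
        exact congrArg Sum.inl (Fin.ext (by omega))
      · by_cases h2 : i.val = u.length + 1
        · obtain ⟨k, hk, hkv⟩ := epair_p1 u v x y b m i h2
          rw [hk]
          obtain ⟨k2, hk2, hk2v⟩ := epair_p u v x y b m k hkv
          rw [hk2]
          exact congrArg Sum.inl (Fin.ext (by omega))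
        · rw [epair_other u v x y b m i h1 h2]
          cases hp : m.pair (Sum.inl (shr u v x y i h1 h2)) with
          | inl k₀ =>
            simp only [Sum.map_inl]
            rw [epair_emb]
            have hq : m.pair (Sum.inl k₀) = Sum.inl (shr u v x y i h1 h2) := by
              rw [← hp, m.invol]
            rw [hq]
            simp only [Sum.map_inl]
            rw [emb_shr]
          | inr j₀ =>
            simp only [Sum.map_inr, id]
            rw [epair_inr]
            have hq : m.pair (Sum.inr j₀) = Sum.inl (shr u v x y i h1 h2) := by
              rw [← hp, m.invol]
            rw [hq]
            simp only [Sum.map_inl]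
            rw [emb_shr]
    · rw [epair_inr]
      cases hp : m.pair (Sum.inr j) with
      | inl k₀ =>
        simp only [Sum.map_inl]
        rw [epair_emb]
        have hq : m.pair (Sum.inl k₀) = Sum.inr j := by rw [← hp, m.invol]
        rw [hq]
        rfl
      | inr j₀ =>
        simp only [Sum.map_inr, id]
        rw [epair_inr]
        have hq : m.pair (Sum.inr j₀) = Sum.inr j := by rw [← hp, m.invol]
        rw [hq]
        rfl
  ne := by
    intro z hz
    rcases z with i | j
    · by_cases h1 : i.val = u.length
      · obtain ⟨k, hk, hkv⟩ := epair_p u v x y b m i h1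
        rw [hk] at hz
        injection hz with hz
        rw [hz] at hkv
        omega
      · by_cases h2 : i.val = u.length + 1
        · obtain ⟨k, hk, hkv⟩ := epair_p1 u v x y b m i h2
          rw [hk] at hz
          injection hz with hz
          rw [hz] at hkv
          omega
        · rw [epair_other u v x y b m i h1 h2] at hz
          cases hp : m.pair (Sum.inl (shr u v x y i h1 h2)) with
          | inl k₀ =>
            rw [hp] at hz
            simp only [Sum.map_inl, Sum.inl.injEq] at hz
            rw [← emb_shr u v x y i h1 h2] at hz
            have := emb_inj u v x y hz
            rw [this] at hp
            exact m.ne _ hp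
          | inr j₀ => rw [hp] at hz; simp at hz
    · rw [epair_inr] at hz
      cases hp : m.pair (Sum.inr j) with
      | inl k₀ => rw [hp] at hz; simp at hz
      | inr j₀ =>
        rw [hp] at hz
        simp only [Sum.map_inr, id, Sum.inr.injEq] at hz
        rw [hz] at hp
        exact m.ne _ hp
  topColor := by
    intro i k h
    rcases epair_inl_inl u v x y b m h with ⟨hi, hk⟩ | ⟨hi, hk⟩ | ⟨i₀, k₀, hp, rfl, rfl⟩
    · have hi' : i = ⟨u.length, hi ▸ i.isLt⟩ := Fin.ext hi
      have hk' : k = ⟨u.length + 1, hk ▸ k.isLt⟩ := Fin.ext hk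
      rw [hi', hk', get_p, get_p1]
      exact hxy
    · have hi' : i = ⟨u.length + 1, hi ▸ i.isLt⟩ := Fin.ext hi
      have hk' : k = ⟨u.length, hk ▸ k.isLt⟩ := Fin.ext hk
      rw [hi', hk', get_p, get_p1]
      exact hxy.symm
    · rw [get_emb, get_emb]
      exact m.topColor i₀ k₀ hp
  botColor := by
    intro j j' h
    exact m.botColor j j' (epair_inr_inr u v x y b m h)
  crossColor := by
    intro i j h
    obtain ⟨i₀, hp, rfl⟩ := epair_inl_inr u v x y b m h
    rw [get_emb]
    exact m.crossColor i₀ j hp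

lemma extNC (hxy : x ≠ y) (hm : TRNonCrossing m) :
    TRNonCrossing (extMatching u v x y b m hxy) := by
  obtain ⟨nc1, nc2, nc3, nc4, nc5⟩ := hm
  refine ⟨?_, ?_, ?_, ?_, ?_⟩
  · intro i j k l h1 h2 ⟨hij, hjk, hkl⟩
    rcases epair_inl_inl u v x y b m h1 with ⟨hi, hk⟩ | ⟨hi, hk⟩ | ⟨i₀, k₀, hp1, rfl, rfl⟩ <;>
      rcases epair_inl_inl u v x y b m h2 with ⟨hj, hl⟩ | ⟨hj, hl⟩ | ⟨j₀, l₀, hp2, rfl, rfl⟩ <;>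
        simp only [Fin.lt_def] at hij hjk hkl <;>
        first
          | omega
          | (rw [emb_val_lt_iff] at hij hjk hkl
             exact nc1 i₀ j₀ k₀ l₀ hp1 hp2 ⟨hij, hjk, hkl⟩)
  · intro i j k l h1 h2 hc
    exact nc2 i j k l (epair_inr_inr u v x y b m h1) (epair_inr_inr u v x y b m h2) hc
  · intro a c i j h1 h2 ⟨hai, hic⟩
    obtain ⟨i₀, hp2, rfl⟩ := epair_inl_inr u v x y b m h2
    rcases epair_inl_inl u v x y b m h1 with ⟨ha, hc⟩ | ⟨ha, hc⟩ | ⟨a₀, c₀, hp1, rfl, rfl⟩ <;>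
      simp only [Fin.lt_def] at hai hic <;>
      first
        | omega
        | (rw [emb_val_lt_iff] at hai hic
           exact nc3 a₀ c₀ i₀ j hp1 hp2 ⟨hai, hic⟩)
  · intro a c i j h1 h2 hc
    obtain ⟨i₀, hp2, rfl⟩ := epair_inl_inr u v x y b m h2
    exact nc4 a c i₀ j (epair_inr_inr u v x y b m h1) hp2 hc
  · intro i i' j j' h1 h2 hii' hjj'
    obtain ⟨i₀, hp1, rfl⟩ := epair_inl_inr u v x y b m h1
    obtain ⟨i₀', hp2, rfl⟩ := epair_inl_inr u v x y b m h2
    simp only [Fin.lt_def] at hii'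
    rw [emb_val_lt_iff] at hii'
    exact nc5 i₀ i₀' j j' hp1 hp2 hii' hjj'

end Ext3

section Flip
variable {t b : List Color}

def flipM (m : TRMatching t b) : TRMatching b t where
  pair z := Sum.swap (m.pair (Sum.swap z))
  invol z := by simp [m.invol]
  ne z h := by
    apply m.ne (Sum.swap z)
    have := congrArg Sum.swap h
    simpa using this
  topColor i j h := by
    apply m.botColor i j
    have := congrArg Sum.swap h
    simpa using this
  botColor i j h := by
    apply m.topColor i j
    have := congrArg Sum.swap h
    simpa using this
  crossColor i j h := by
    have h' : m.pair (Sum.inr i) = Sum.inl j := by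
      have := congrArg Sum.swap h
      simpa using this
    have h'' : m.pair (Sum.inl j) = Sum.inr i := by rw [← h', m.invol]
    exact (m.crossColor j i h'').symm

lemma flip_pair_inl {m : TRMatching t b} {i j} :
    (flipM m).pair (Sum.inl i) = Sum.inl j ↔ m.pair (Sum.inr i) = Sum.inr j := by
  constructor <;> intro h
  · have := congrArg Sum.swap h; simpa [flipM] using this
  · simp [flipM, h]

lemma flip_pair_inr {m : TRMatching t b} {i j} :
    (flipM m).pair (Sum.inr i) = Sum.inr j ↔ m.pair (Sum.inl i) = Sum.inl j := by
  constructor <;> intro h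
  · have := congrArg Sum.swap h; simpa [flipM] using this
  · simp [flipM, h]

lemma flip_pair_cross {m : TRMatching t b} {i j} :
    (flipM m).pair (Sum.inl i) = Sum.inr j ↔ m.pair (Sum.inl j) = Sum.inr i := by
  constructor <;> intro h
  · have h' : m.pair (Sum.inr i) = Sum.inl j := by
      have := congrArg Sum.swap h; simpa [flipM] using this
    rw [← h', m.invol]
  · have h' : m.pair (Sum.inr i) = Sum.inl j := by rw [← h, m.invol]
    simp [flipM, h']

lemma flipNC {m : TRMatching t b} (hm : TRNonCrossing m) : TRNonCrossing (flipM m) := by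
  obtain ⟨nc1, nc2, nc3, nc4, nc5⟩ := hm
  refine ⟨?_, ?_, ?_, ?_, ?_⟩
  · intro i j k l h1 h2 hc
    exact nc2 i j k l (flip_pair_inl.mp h1) (flip_pair_inl.mp h2) hc
  · intro i j k l h1 h2 hc
    exact nc1 i j k l (flip_pair_inr.mp h1) (flip_pair_inr.mp h2) hc
  · intro a c i j h1 h2 hc
    exact nc4 a c j i (flip_pair_inl.mp h1) (flip_pair_cross.mp h2) hc
  · intro a c i j h1 h2 hc
    exact nc3 a c j i (flip_pair_inr.mp h1) (flip_pair_cross.mp h2) hc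
  · intro i i' j j' h1 h2 hii' hjj'
    exact nc5 j' j i' i (flip_pair_cross.mp h2) (flip_pair_cross.mp h1) hjj' hii'

end Flip

lemma cross_match (t b : List Color) (hlen : t.length = b.length)
    (hcol : ∀ (i : ℕ) (hi : i < t.length) (hj : i < b.length), t[i] = b[i]) :
    ∃ m : TRMatching t b, TRNonCrossing m := by
  refine ⟨⟨fun z => match z with
    | Sum.inl i => Sum.inr ⟨i.val, by have := i.isLt; omega⟩
    | Sum.inr j => Sum.inl ⟨j.val, by have := j.isLt; omega⟩, ?_, ?_, ?_, ?_, ?_⟩,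
    ?_, ?_, ?_, ?_, ?_⟩
  · intro z; rcases z with i | j <;> rfl
  · intro z; rcases z with i | j <;> simp
  · intro i j h; simp at h
  · intro i j h; simp at h
  · intro i j h
    simp only [Sum.inr.injEq] at h
    have hv : j.val = i.val := by rw [← h]
    simp only [List.get_eq_getElem, hv]
    exact hcol i.val i.isLt (hv ▸ j.isLt)
  · intro i j k l h1 h2; simp at h1
  · intro i j k l h1 h2; simp at h1
  · intro a c i j h1 h2; simp at h1
  · intro a c i j h1 h2; simp at h1
  · intro i i' j j' h1 h2 hii' hjj'
    simp only [Sum.inr.injEq] at h1 h2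
    have e1 : j.val = i.val := by rw [← h1]
    have e2 : j'.val = i'.val := by rw [← h2]
    simp only [Fin.lt_def] at hii' hjj'
    omega

lemma all_eq_zero (l : List Color) (hl : ∀ (i : ℕ) (h : i + 1 < l.length), l[i] = l[i+1]) :
    ∀ (i : ℕ) (h : i < l.length) (h0 : 0 < l.length), l[i] = l[0] := by
  intro i
  induction i with
  | zero => intro h h0; rfl
  | succ n ih =>
    intro h h0
    rw [← hl n h]
    exact ih (by omega) h0

lemma const_cases (l : List Color) (hl : ∀ (i : ℕ) (h : i + 1 < l.length), l[i] = l[i+1]) :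
    ((l.count Color.red : ℤ) - l.count Color.blue = l.length
        ∧ ∀ (i : ℕ) (h : i < l.length), l[i] = Color.red) ∨
    ((l.count Color.red : ℤ) - l.count Color.blue = -l.length
        ∧ ∀ (i : ℕ) (h : i < l.length), l[i] = Color.blue) := by
  rcases Nat.eq_zero_or_pos l.length with h0 | h0
  · left
    have : l = [] := List.eq_nil_of_length_eq_zero h0
    subst this
    simp
  · have key : ∀ (i : ℕ) (h : i < l.length), l[i] = l[0]'h0 :=
      fun i h => all_eq_zero l hl i h h0
    have hmem : ∀ c ∈ l, c = l[0]'h0 := by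
      intro c hc
      obtain ⟨i, hi, rfl⟩ := List.mem_iff_getElem.mp hc
      exact key i hi
    cases hc : l[0]'h0 with
    | red =>
      left
      have hcount : l.count Color.red = l.length := by
        rw [List.count_eq_length]
        intro c hcmem
        rw [hmem c hcmem, hc]
      have hblue : l.count Color.blue = 0 := by
        rw [List.count_eq_zero]
        intro hmem2
        have := hmem _ hmem2
        rw [hc] at this
        exact Color.noConfusion this
      refine ⟨by rw [hcount, hblue]; simp, fun i h => by rw [key i h, hc]⟩
    | blue =>
      right
      have hcount : l.count Color.blue = l.length := by
        rw [List.count_eq_length]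
        intro c hcmem
        rw [hmem c hcmem, hc]
      have hred : l.count Color.red = 0 := by
        rw [List.count_eq_zero]
        intro hmem2
        have := hmem _ hmem2
        rw [hc] at this
        exact Color.noConfusion this
      refine ⟨by rw [hcount, hred]; simp, fun i h => by rw [key i h, hc]⟩

lemma decompose (t : List Color) (p : ℕ) (hp : p + 1 < t.length) :
    t = t.take p ++ t[p] :: t[p+1] :: t.drop (p+2) ∧ (t.take p).length = p := by
  constructor
  · conv_lhs => rw [← List.take_append_drop p t]
    congr 1
    rw [List.drop_eq_getElem_cons (by omega)]
    congr 1
    rw [List.drop_eq_getElem_cons hp]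
  · rw [List.length_take]; omega

lemma count_uv (u v : List Color) (x y : Color) (hxy : x ≠ y) :
    ((u ++ x :: y :: v).count Color.red : ℤ) - (u ++ x :: y :: v).count Color.blue
      = ((u ++ v).count Color.red : ℤ) - (u ++ v).count Color.blue := by
  simp only [List.count_append, List.count_cons]
  cases x <;> cases y <;> simp_all <;> push_cast <;> ring

lemma backward : ∀ (n : ℕ) (t b : List Color), t.length + b.length ≤ n →
    (t.count Color.red : ℤ) - t.count Color.blue
      = (b.count Color.red : ℤ) - b.count Color.blue →
    ∃ m : TRMatching t b, TRNonCrossing m := by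
  intro n
  induction n with
  | zero =>
    intro t b hlen _
    exact cross_match t b (by omega) (fun i hi _ => by omega)
  | succ n ih =>
    intro t b hlen hS
    by_cases hta : ∃ p, ∃ h : p + 1 < t.length, t[p]'(by omega) ≠ t[p+1]'h
    · obtain ⟨p, hp, hne⟩ := hta
      obtain ⟨ht, hu⟩ := decompose t p hp
      rw [ht] at hS ⊢
      rw [count_uv _ _ _ _ hne] at hS
      have hlen' : (t.take p ++ t.drop (p + 2)).length + b.length ≤ n := by
        have h1 : t.length = (t.take p ++ t.drop (p+2)).length + 2 := by
          conv_lhs => rw [ht]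
          simp
          omega
        omega
      obtain ⟨m, hm⟩ := ih _ b hlen' hS
      exact ⟨extMatching _ _ _ _ _ m hne, extNC _ _ _ _ _ m hne hm⟩
    · by_cases htb : ∃ p, ∃ h : p + 1 < b.length, b[p]'(by omega) ≠ b[p+1]'h
      · obtain ⟨p, hp, hne⟩ := htb
        obtain ⟨hb, hu⟩ := decompose b p hp
        rw [hb] at hS ⊢
        rw [count_uv _ _ _ _ hne] at hS
        have hlen' : (b.take p ++ b.drop (p + 2)).length + t.length ≤ n := by
          have h1 : b.length = (b.take p ++ b.drop (p+2)).length + 2 := by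
            conv_lhs => rw [hb]
            simp
            omega
          omega
        obtain ⟨m, hm⟩ := ih _ t hlen' hS.symm
        exact ⟨flipM (extMatching _ _ _ _ _ m hne),
          flipNC (extNC _ _ _ _ _ m hne hm)⟩
      · push_neg at hta htb
        rcases const_cases t (fun i h => hta i h) with ⟨hst, hct⟩ | ⟨hst, hct⟩ <;>
          rcases const_cases b (fun i h => htb i h) with ⟨hsb, hcb⟩ | ⟨hsb, hcb⟩
        · exact cross_match t b (by omega)
            (fun i hi hj => by rw [hct i hi, hcb i hj])
        · exact cross_match t b (by omega) (fun i hi hj => by omega)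
        · exact cross_match t b (by omega) (fun i hi hj => by omega)
        · exact cross_match t b (by omega)
            (fun i hi hj => by rw [hct i hi, hcb i hj])

/-- A two-row bead configuration admits at least one non-crossing matching iff
(#red − #blue) in the top row equals (#red − #blue) in the bottom row. -/
theorem stmt3 (t b : List Color) :
    (∃ m : TRMatching t b, TRNonCrossing m) ↔
      (t.count Color.red : ℤ) - t.count Color.blue
        = (b.count Color.red : ℤ) - b.count Color.blue := by
  constructor
  · rintro ⟨m, -⟩
    exact forward m
  · intro h
    exact backward (t.length + b.length) t b le_rfl h
end

section
/- Suppose a two-row bead configuration has equally many red and blue beads in the top row and equally many red and blue beads in the bottom row, the leftmost top bead is red, and the leftmost bottom bead is red. Then the configuration has at least two distinct non-crossing matchings. -/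
structure RowM (l : List Color) where
  f : ℕ → ℕ
  mapsTo : ∀ x, x < l.length → f x < l.length
  invol : ∀ x, x < l.length → f (f x) = x
  ne : ∀ x, x < l.length → f x ≠ x
  color : ∀ x (h : x < l.length), l[x]'h ≠ l[f x]'(mapsTo x h)
  nc : ∀ x y, x < l.length → y < l.length → x < y → y < f x → f y < f x

lemma exists_adj (l : List Color) (hl : l.count .red = l.count .blue) (hne : l ≠ []) :
    ∃ i, ∃ h : i + 1 < l.length, l[i]'(Nat.lt_of_succ_lt h) ≠ l[i+1]'h := by
  by_contra hcon
  push_neg at hcon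
  have h0 : 0 < l.length := List.length_pos_iff.mpr hne
  have hall : ∀ j (h : j < l.length), l[j]'h = l[0]'h0 := by
    intro j
    induction j with
    | zero => intro h; rfl
    | succ k ih =>
      intro h
      have hk : k + 1 < l.length := h
      rw [← hcon k hk]
      exact ih _
  have hrep : l = List.replicate l.length (l[0]'h0) := by
    apply List.ext_getElem
    · simp
    · intro i h1 h2
      simp [hall i h1]
  rw [hrep] at hl
  rcases hc : (l[0]'h0) with _ | _ <;> rw [hc] at hl <;>
    simp [List.count_replicate] at hl
  · exact hne hl
  · omega

lemma gei (l : List Color) {a b : ℕ} (h : a = b) (ha : a < l.length) :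
    l[a]'ha = l[b]'(h ▸ ha) := by subst h; rfl

lemma rowm_step (l : List Color) (i : ℕ) (hi : i + 1 < l.length)
    (hne : l[i]'(Nat.lt_of_succ_lt hi) ≠ l[i+1]'hi)
    (g : RowM (l.take i ++ l.drop (i+2))) : Nonempty (RowM l) := by
  set l' := l.take i ++ l.drop (i+2) with hl'
  set n := l.length with hn
  have hm : l'.length = n - 2 := by
    simp [hl', List.length_take, List.length_drop]
    omega
  set E : ℕ → ℕ := fun k => if k < i then k else k + 2 with hE
  set D : ℕ → ℕ := fun x => if x < i then x else x - 2 with hD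
  have hE_lt : ∀ k, k < n - 2 → E k < n := by
    intro k hk; simp only [hE]; split <;> omega
  have hE_ne : ∀ k, E k ≠ i ∧ E k ≠ i + 1 := by
    intro k; simp only [hE]; split <;> omega
  have hD_lt : ∀ x, x < n → x ≠ i → x ≠ i + 1 → D x < n - 2 := by
    intro x h1 h2 h3; simp only [hD]; split <;> omega
  have hED : ∀ x, x ≠ i → x ≠ i + 1 → E (D x) = x := by
    intro x h2 h3; simp only [hD, hE]; split
    · simp only [if_pos ‹_›]
    · rw [if_neg] <;> omega
  have hDE : ∀ k, D (E k) = k := by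
    intro k; simp only [hD, hE]; split
    · simp only [if_pos ‹_›]
    · rw [if_neg] <;> omega
  have hE_mono : ∀ k k', k < k' → E k < E k' := by
    intro k k' h; simp only [hE]; split <;> split <;> omega
  have hget : ∀ k (h : k < l'.length), l'[k]'h = l[E k]'(hE_lt k (hm ▸ h)) := by
    intro k h
    have hkm : k < n - 2 := hm ▸ h
    by_cases hk : k < i
    · have h1 : k < (l.take i).length := by simp [List.length_take]; omega
      rw [List.getElem_append_left h1]
      rw [List.getElem_take]
      exact gei l (if_pos hk).symm _
    · have h1 : (l.take i).length ≤ k := by simp [List.length_take]; omega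
      rw [List.getElem_append_right h1]
      rw [List.getElem_drop]
      apply gei
      simp only [List.length_take, hE]
      rw [if_neg hk]
      omega
  
  classical
  set F : ℕ → ℕ := fun x => if x = i then i + 1 else if x = i + 1 then i
      else E (g.f (D x)) with hF
  have hFi : F i = i + 1 := by simp [hF]
  have hFi1 : F (i+1) = i := by
    simp only [hF]; rw [if_neg (by omega)]; simp
  have hFo : ∀ x, x ≠ i → x ≠ i + 1 → F x = E (g.f (D x)) := by
    intro x h1 h2; simp only [hF]; rw [if_neg h1, if_neg h2]
  have hdlt' : ∀ x, x < n → x ≠ i → x ≠ i + 1 → D x < l'.length := by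
    intro x hx h1 h2; rw [hm]; exact hD_lt x hx h1 h2
  have hglt : ∀ x, x < n → x ≠ i → x ≠ i + 1 → g.f (D x) < n - 2 := by
    intro x hx h1 h2; rw [← hm]; exact g.mapsTo _ (hdlt' x hx h1 h2)
  have hmaps : ∀ x, x < n → F x < n := by
    intro x hx
    by_cases h1 : x = i
    · subst h1; rw [hFi]; omega
    by_cases h2 : x = i + 1
    · subst h2; rw [hFi1]; omega
    rw [hFo x h1 h2]; exact hE_lt _ (hglt x hx h1 h2)
  refine ⟨⟨F, hmaps, ?_, ?_, ?_, ?_⟩⟩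
  · -- invol
    intro x hx
    by_cases h1 : x = i
    · subst h1; rw [hFi, hFi1]
    by_cases h2 : x = i + 1
    · subst h2; rw [hFi1, hFi]
    rw [hFo x h1 h2]
    have hk' := hglt x hx h1 h2
    have hne' := hE_ne (g.f (D x))
    rw [hFo _ hne'.1 hne'.2, hDE]
    rw [g.invol _ (hdlt' x hx h1 h2)]
    exact hED x h1 h2
  · -- ne
    intro x hx
    by_cases h1 : x = i
    · subst h1; rw [hFi]; omega
    by_cases h2 : x = i + 1
    · subst h2; rw [hFi1]; omega
    rw [hFo x h1 h2]
    intro hcon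
    have h3 := congrArg D hcon
    rw [hDE] at h3
    exact g.ne (D x) (hdlt' x hx h1 h2) h3
  · -- color
    intro x hx
    by_cases h1 : x = i
    · subst h1; simp only [hFi]; exact hne
    by_cases h2 : x = i + 1
    · subst h2; simp only [hFi1]; exact fun e => hne e.symm
    intro hcon
    refine g.color (D x) (hdlt' x hx h1 h2) ?_
    have e1 : l'[D x]'(hdlt' x hx h1 h2) = l[x]'hx :=
      (hget _ _).trans (gei l (hED x h1 h2) _)
    have e2 : l[F x]'(hmaps x hx) = l'[g.f (D x)]'(hm.symm ▸ hglt x hx h1 h2) :=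
      (gei l (hFo x h1 h2) _).trans (hget _ _).symm
    exact e1.trans (hcon.trans e2)
  · -- nc
    intro x y hx hy hxy hyfx
    by_cases h1 : x = i
    · subst h1; rw [hFi] at hyfx; omega
    by_cases h2 : x = i + 1
    · subst h2; rw [hFi1] at hyfx; omega
    rw [hFo x h1 h2] at hyfx ⊢
    have hk' := hglt x hx h1 h2
    have hne' := hE_ne (g.f (D x))
    by_cases hy1 : y = i
    · subst hy1; rw [hFi]; omega
    by_cases hy2 : y = i + 1
    · subst hy2; rw [hFi1]
      have : i + 1 < E (g.f (D x)) := hyfx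
      omega
    rw [hFo y hy1 hy2]
    have hdxy : D x < D y := by
      simp only [hD]; split <;> split <;> omega
    have hdyk : D y < g.f (D x) := by
      have hEk : E (g.f (D x)) = if g.f (D x) < i then g.f (D x) else g.f (D x) + 2 := rfl
      have hDy : D y = if y < i then y else y - 2 := rfl
      rw [hEk] at hyfx
      rw [hDy]
      split at hyfx <;> split <;> omega
    have hlt := g.nc (D x) (D y) (hdlt' x hx h1 h2) (hdlt' y hy hy1 hy2) hdxy hdyk
    exact hE_mono _ _ hlt

lemma balanced_reduce (l : List Color) (i : ℕ) (hi : i + 1 < l.length)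
    (hne : l[i]'(Nat.lt_of_succ_lt hi) ≠ l[i+1]'hi)
    (hl : l.count .red = l.count .blue) :
    (l.take i ++ l.drop (i+2)).count .red = (l.take i ++ l.drop (i+2)).count .blue := by
  have h1 : l.drop i = l[i]'(Nat.lt_of_succ_lt hi) :: l[i+1]'hi :: l.drop (i+2) := by
    rw [List.drop_eq_getElem_cons (Nat.lt_of_succ_lt hi)]
    congr 1
    exact List.drop_eq_getElem_cons hi
  have hc : ∀ c : Color, l.count c = (l.take i).count c + (l.drop (i+2)).count c
      + (if (l[i]'(Nat.lt_of_succ_lt hi)) = c then 1 else 0)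
      + (if (l[i+1]'hi) = c then 1 else 0) := by
    intro c
    conv_lhs => rw [← List.take_append_drop i l]
    rw [List.count_append, h1, List.count_cons, List.count_cons]
    simp only [beq_iff_eq]
    omega
  rw [hc .red, hc .blue] at hl
  rw [List.count_append, List.count_append]
  rcases h2 : (l[i]'(Nat.lt_of_succ_lt hi)) <;> rcases h3 : (l[i+1]'hi) <;>
    rw [h2, h3] at hl hne <;> simp at hl hne ⊢ <;> omega

lemma rowm_nil (l : List Color) (h : l.length = 0) : Nonempty (RowM l) :=
  ⟨⟨id, fun x hx => absurd hx (by omega), fun x hx => absurd hx (by omega),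
    fun x hx => absurd hx (by omega), fun x hx => absurd hx (by omega),
    fun x y hx => absurd hx (by omega)⟩⟩

lemma rowm_ex : ∀ (n : ℕ) (l : List Color), l.length ≤ n →
    l.count .red = l.count .blue → Nonempty (RowM l) := by
  intro n
  induction n with
  | zero =>
    intro l hl _
    exact rowm_nil l (by omega)
  | succ m ih =>
    intro l hl hbal
    by_cases hnil : l = []
    · exact rowm_nil l (by simp [hnil])
    obtain ⟨i, hi, hne⟩ := exists_adj l hbal hnil
    have hbal' := balanced_reduce l i hi hne hbal
    have hlen : (l.take i ++ l.drop (i+2)).length ≤ m := by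
      simp [List.length_take, List.length_drop]; omega
    obtain ⟨g⟩ := ih _ hlen hbal'
    exact rowm_step l i hi hne g

lemma head_red {l : List Color} (h : l.head? = some Color.red) :
    ∃ hp : 0 < l.length, l[0]'hp = Color.red := by
  cases l with
  | nil => simp at h
  | cons a s => simp_all

/-- If each row has equally many red and blue beads and the leftmost bead of each row
is red, then the two-row configuration has at least two distinct non-crossing
matchings. -/
theorem stmt12 (t b : List Color)
    (ht : t.count Color.red = t.count Color.blue)
    (hb : b.count Color.red = b.count Color.blue)
    (ht0 : t.head? = some Color.red) (hb0 : b.head? = some Color.red) :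
    ∃ m₁ m₂ : TRMatching t b, TRNonCrossing m₁ ∧ TRNonCrossing m₂ ∧ m₁ ≠ m₂ := by
  classical
  obtain ⟨T⟩ := rowm_ex t.length t le_rfl ht
  obtain ⟨B⟩ := rowm_ex b.length b le_rfl hb
  obtain ⟨htpos, htr⟩ := head_red ht0
  obtain ⟨hbpos, hbr⟩ := head_red hb0
  set p := T.f 0 with hpdef
  set q := B.f 0 with hqdef
  have hp : p < t.length := T.mapsTo 0 htpos
  have hq : q < b.length := B.mapsTo 0 hbpos
  have hpne : p ≠ 0 := T.ne 0 htpos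
  have hqne : q ≠ 0 := B.ne 0 hbpos
  have hTp : T.f p = 0 := T.invol 0 htpos
  have hBq : B.f q = 0 := B.invol 0 hbpos
  have htp : t[p]'hp = Color.blue := by
    have := T.color 0 htpos
    rw [htr] at this
    cases h : t[p]'hp with
    | red => exact absurd h.symm this
    | blue => rfl
  have hbq : b[q]'hq = Color.blue := by
    have := B.color 0 hbpos
    rw [hbr] at this
    cases h : b[q]'hq with
    | red => exact absurd h.symm this
    | blue => rfl
  have hTne0 : ∀ x, x < t.length → x ≠ 0 → x ≠ p → T.f x ≠ 0 := by
    intro x hx h0 hpp hcon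
    apply hpp
    have := T.invol x hx
    rw [hcon] at this
    rw [← this, hpdef]
  have hTnep : ∀ x, x < t.length → x ≠ 0 → x ≠ p → T.f x ≠ p := by
    intro x hx h0 hpp hcon
    apply h0
    have := T.invol x hx
    rw [hcon, hTp] at this
    exact this.symm
  have hBne0 : ∀ x, x < b.length → x ≠ 0 → x ≠ q → B.f x ≠ 0 := by
    intro x hx h0 hpp hcon
    apply hpp
    have := B.invol x hx
    rw [hcon] at this
    rw [← this, hqdef]
  have hBneq : ∀ x, x < b.length → x ≠ 0 → x ≠ q → B.f x ≠ q := by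
    intro x hx h0 hpp hcon
    apply h0
    have := B.invol x hx
    rw [hcon, hBq] at this
    exact this.symm
  have decode_top : ∀ (i k : Fin t.length),
      (if i.1 = 0 then (Sum.inr ⟨0, hbpos⟩ : Fin t.length ⊕ Fin b.length)
        else if i.1 = p then Sum.inr ⟨q, hq⟩
        else Sum.inl ⟨T.f i.1, T.mapsTo i.1 i.2⟩) = Sum.inl k →
      i.1 ≠ 0 ∧ i.1 ≠ p ∧ T.f i.1 = k.1 := by
    intro i k h
    by_cases h0 : i.1 = 0
    · rw [if_pos h0] at h; simp at h
    by_cases hpp : i.1 = p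
    · rw [if_neg h0, if_pos hpp] at h; simp at h
    rw [if_neg h0, if_neg hpp] at h
    exact ⟨h0, hpp, congrArg Fin.val (Sum.inl.inj h)⟩
  have decode_bot : ∀ (j k : Fin b.length),
      (if j.1 = 0 then (Sum.inl ⟨0, htpos⟩ : Fin t.length ⊕ Fin b.length)
        else if j.1 = q then Sum.inl ⟨p, hp⟩
        else Sum.inr ⟨B.f j.1, B.mapsTo j.1 j.2⟩) = Sum.inr k →
      j.1 ≠ 0 ∧ j.1 ≠ q ∧ B.f j.1 = k.1 := by
    intro j k h
    by_cases h0 : j.1 = 0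
    · rw [if_pos h0] at h; simp at h
    by_cases hpp : j.1 = q
    · rw [if_neg h0, if_pos hpp] at h; simp at h
    rw [if_neg h0, if_neg hpp] at h
    exact ⟨h0, hpp, congrArg Fin.val (Sum.inr.inj h)⟩
  have decode_cross : ∀ (i : Fin t.length) (j : Fin b.length),
      (if i.1 = 0 then (Sum.inr ⟨0, hbpos⟩ : Fin t.length ⊕ Fin b.length)
        else if i.1 = p then Sum.inr ⟨q, hq⟩
        else Sum.inl ⟨T.f i.1, T.mapsTo i.1 i.2⟩) = Sum.inr j →
      (i.1 = 0 ∧ j.1 = 0) ∨ (i.1 = p ∧ j.1 = q) := by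
    intro i j h
    by_cases h0 : i.1 = 0
    · rw [if_pos h0] at h
      exact Or.inl ⟨h0, (congrArg Fin.val (Sum.inr.inj h)).symm⟩
    by_cases hpp : i.1 = p
    · rw [if_neg h0, if_pos hpp] at h
      exact Or.inr ⟨hpp, (congrArg Fin.val (Sum.inr.inj h)).symm⟩
    rw [if_neg h0, if_neg hpp] at h
    simp at h
  refine ⟨⟨Sum.elim (fun i => Sum.inl ⟨T.f i.1, T.mapsTo i.1 i.2⟩)
      (fun j => Sum.inr ⟨B.f j.1, B.mapsTo j.1 j.2⟩), ?_, ?_, ?_, ?_, ?_⟩,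
    ⟨Sum.elim
      (fun i => if i.1 = 0 then (Sum.inr ⟨0, hbpos⟩ : Fin t.length ⊕ Fin b.length)
        else if i.1 = p then Sum.inr ⟨q, hq⟩
        else Sum.inl ⟨T.f i.1, T.mapsTo i.1 i.2⟩)
      (fun j => if j.1 = 0 then (Sum.inl ⟨0, htpos⟩ : Fin t.length ⊕ Fin b.length)
        else if j.1 = q then Sum.inl ⟨p, hp⟩
        else Sum.inr ⟨B.f j.1, B.mapsTo j.1 j.2⟩), ?_, ?_, ?_, ?_, ?_⟩, ?_, ?_, ?_⟩
  · -- m₁ invol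
    rintro (i | j)
    · exact congrArg Sum.inl (Fin.ext (T.invol i.1 i.2))
    · exact congrArg Sum.inr (Fin.ext (B.invol j.1 j.2))
  · -- m₁ ne
    rintro (i | j) h
    · exact T.ne i.1 i.2 (congrArg Fin.val (Sum.inl.inj h))
    · exact B.ne j.1 j.2 (congrArg Fin.val (Sum.inr.inj h))
  · -- m₁ topColor
    intro i j h
    have hj : (⟨T.f i.1, T.mapsTo i.1 i.2⟩ : Fin t.length) = j := Sum.inl.inj h
    subst hj
    simp only [List.get_eq_getElem]
    exact T.color i.1 i.2
  · -- m₁ botColor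
    intro i j h
    have hj : (⟨B.f i.1, B.mapsTo i.1 i.2⟩ : Fin b.length) = j := Sum.inr.inj h
    subst hj
    simp only [List.get_eq_getElem]
    exact B.color i.1 i.2
  · -- m₁ crossColor
    intro i j h
    simp at h
  · -- m₂ invol
    rintro (i | j)
    · simp only [Sum.elim_inl]
      by_cases h0 : i.1 = 0
      · rw [if_pos h0]
        simp only [Sum.elim_inr]
        split_ifs <;>
          first
          | exact congrArg Sum.inl (Fin.ext h0.symm)
          | exact absurd ‹(0:ℕ) = q› (by omega)
      by_cases hpp : i.1 = p
      · rw [if_neg h0, if_pos hpp]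
        simp only [Sum.elim_inr]
        split_ifs <;>
          first
          | exact absurd ‹q = 0› hqne
          | exact congrArg Sum.inl (Fin.ext hpp.symm)
      · rw [if_neg h0, if_neg hpp]
        simp only [Sum.elim_inl]
        rw [if_neg (hTne0 i.1 i.2 h0 hpp), if_neg (hTnep i.1 i.2 h0 hpp)]
        exact congrArg Sum.inl (Fin.ext (T.invol i.1 i.2))
    · simp only [Sum.elim_inr]
      by_cases h0 : j.1 = 0
      · rw [if_pos h0]
        simp only [Sum.elim_inl]
        split_ifs <;>
          first
          | exact congrArg Sum.inr (Fin.ext h0.symm)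
          | exact absurd ‹(0:ℕ) = p› (by omega)
      by_cases hpp : j.1 = q
      · rw [if_neg h0, if_pos hpp]
        simp only [Sum.elim_inl]
        split_ifs <;>
          first
          | exact absurd ‹p = 0› hpne
          | exact congrArg Sum.inr (Fin.ext hpp.symm)
      · rw [if_neg h0, if_neg hpp]
        simp only [Sum.elim_inr]
        rw [if_neg (hBne0 j.1 j.2 h0 hpp), if_neg (hBneq j.1 j.2 h0 hpp)]
        exact congrArg Sum.inr (Fin.ext (B.invol j.1 j.2))
  · -- m₂ ne
    rintro (i | j) h <;> simp only [Sum.elim_inl, Sum.elim_inr] at h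
    · by_cases h0 : i.1 = 0
      · rw [if_pos h0] at h; simp at h
      by_cases hpp : i.1 = p
      · rw [if_neg h0, if_pos hpp] at h; simp at h
      · rw [if_neg h0, if_neg hpp] at h
        exact T.ne i.1 i.2 (congrArg Fin.val (Sum.inl.inj h))
    · by_cases h0 : j.1 = 0
      · rw [if_pos h0] at h; simp at h
      by_cases hpp : j.1 = q
      · rw [if_neg h0, if_pos hpp] at h; simp at h
      · rw [if_neg h0, if_neg hpp] at h
        exact B.ne j.1 j.2 (congrArg Fin.val (Sum.inr.inj h))
  · -- m₂ topColor
    intro i k h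
    obtain ⟨h0, hpp, hk⟩ := decode_top i k h
    simp only [List.get_eq_getElem]
    have : t[k.1]'k.2 = t[T.f i.1]'(T.mapsTo i.1 i.2) := gei t hk.symm k.2
    rw [this]
    exact T.color i.1 i.2
  · -- m₂ botColor
    intro j k h
    obtain ⟨h0, hpp, hk⟩ := decode_bot j k h
    simp only [List.get_eq_getElem]
    have : b[k.1]'k.2 = b[B.f j.1]'(B.mapsTo j.1 j.2) := gei b hk.symm k.2
    rw [this]
    exact B.color j.1 j.2
  · -- m₂ crossColor
    intro i j h
    rcases decode_cross i j h with ⟨h1, h2⟩ | ⟨h1, h2⟩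
    · simp only [List.get_eq_getElem]
      rw [gei t h1 i.2, gei b h2 j.2, htr, hbr]
    · simp only [List.get_eq_getElem]
      rw [gei t h1 i.2, gei b h2 j.2, htp, hbq]
  · -- NC m₁
    refine ⟨?_, ?_, ?_, ?_, ?_⟩
    · intro i j k l' h1 h2 hcon
      have hk : T.f i.1 = k.1 := congrArg Fin.val (Sum.inl.inj h1)
      have hl : T.f j.1 = l'.1 := congrArg Fin.val (Sum.inl.inj h2)
      obtain ⟨c1, c2, c3⟩ := hcon
      rw [Fin.lt_def] at c1 c2 c3
      have := T.nc i.1 j.1 i.2 j.2 c1 (by omega)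
      omega
    · intro i j k l' h1 h2 hcon
      have hk : B.f i.1 = k.1 := congrArg Fin.val (Sum.inr.inj h1)
      have hl : B.f j.1 = l'.1 := congrArg Fin.val (Sum.inr.inj h2)
      obtain ⟨c1, c2, c3⟩ := hcon
      rw [Fin.lt_def] at c1 c2 c3
      have := B.nc i.1 j.1 i.2 j.2 c1 (by omega)
      omega
    · intro a c i j h1 h2 hcon
      simp at h2
    · intro a c i j h1 h2 hcon
      simp at h2
    · intro i i' j j' h1 h2 hcon
      simp at h1
  · -- NC m₂
    refine ⟨?_, ?_, ?_, ?_, ?_⟩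
    · intro i j k l' h1 h2 hcon
      obtain ⟨_, _, hk⟩ := decode_top i k h1
      obtain ⟨_, _, hl⟩ := decode_top j l' h2
      obtain ⟨c1, c2, c3⟩ := hcon
      rw [Fin.lt_def] at c1 c2 c3
      have := T.nc i.1 j.1 i.2 j.2 c1 (by omega)
      omega
    · intro i j k l' h1 h2 hcon
      obtain ⟨_, _, hk⟩ := decode_bot i k h1
      obtain ⟨_, _, hl⟩ := decode_bot j l' h2
      obtain ⟨c1, c2, c3⟩ := hcon
      rw [Fin.lt_def] at c1 c2 c3
      have := B.nc i.1 j.1 i.2 j.2 c1 (by omega)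
      omega
    · intro a c i j h1 h2 hcon
      obtain ⟨ha0, hap, hc⟩ := decode_top a c h1
      obtain ⟨c1, c2⟩ := hcon
      rw [Fin.lt_def] at c1 c2
      rcases decode_cross i j h2 with ⟨hx, _⟩ | ⟨hx, _⟩
      · omega
      · -- a < p < T.f a, with 0 < a < p = T.f 0
        have := T.nc 0 a.1 htpos a.2 (by omega) (by omega)
        omega
    · intro a c i j h1 h2 hcon
      obtain ⟨ha0, hap, hc⟩ := decode_bot a c h1
      obtain ⟨c1, c2⟩ := hcon
      rw [Fin.lt_def] at c1 c2
      rcases decode_cross i j h2 with ⟨_, hx⟩ | ⟨_, hx⟩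
      · omega
      · have := B.nc 0 a.1 hbpos a.2 (by omega) (by omega)
        omega
    · intro i i' j j' h1 h2 hii hjj
      rw [Fin.lt_def] at hii hjj
      rcases decode_cross i j h1 with ⟨hx1, hx2⟩ | ⟨hx1, hx2⟩ <;>
        rcases decode_cross i' j' h2 with ⟨hy1, hy2⟩ | ⟨hy1, hy2⟩ <;> omega
  · -- m₁ ≠ m₂
    intro heq
    have h2 := congrFun (congrArg TRMatching.pair heq) (Sum.inl ⟨0, htpos⟩)
    simp at h2
end
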